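/- arXiv:2307.03950 — 9 statements merged into one kernel-verified Lean document; each statement's English description precedes it below -/
import Mathlib

section
/- Let M be an abelian group equipped with a symmetric bilinear form B : M × M → ℤ which is positive definite, i.e. B(x,x) > 0 for every x ≠ 0. Let v ∈ M be a nonzero element whose square norm k := B(v,v) is minimal among all nonzero elements: B(u,u) ≥ k for every nonzero u ∈ M. Then every element x of the coset v + 2M (i.e. x = v + 2g for some g ∈ M) is nonzero and satisfies B(x,x) ≥ k, and B(x,x) = k holds if and only if x = v or x = −v. In particular the coset v + 2M contains exactly two elements of minimal square norm k, namely ±v. -/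
/-- In a positive definite integral lattice, if `v ≠ 0` has minimal square norm `k`
among all nonzero elements, then every element of the coset `v + 2M` is nonzero,
has square norm at least `k`, with equality exactly for `±v`. -/
theorem coset_min_norm_elements
    (M : Type*) [AddCommGroup M]
    (B : M →ₗ[ℤ] M →ₗ[ℤ] ℤ)
    (hsymm : ∀ x y : M, B x y = B y x)
    (hpos : ∀ x : M, x ≠ 0 → 0 < B x x)
    (v : M) (hv : v ≠ 0) (k : ℤ) (hk : k = B v v)
    (hmin : ∀ u : M, u ≠ 0 → k ≤ B u u) :
    ∀ g : M, v + 2 • g ≠ 0 ∧ k ≤ B (v + 2 • g) (v + 2 • g) ∧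
      (B (v + 2 • g) (v + 2 • g) = k ↔ (v + 2 • g = v ∨ v + 2 • g = -v)) := by
  intro g
  have hk0 : 0 < k := hk ▸ hpos v hv
  have hexp : v + 2 • g = v + g + g := by
    rw [two_smul]; abel
  by_cases hg : g = 0
  · subst hg
    simp only [smul_zero, add_zero]
    exact ⟨hv, le_of_eq hk, by tauto⟩
  · by_cases hvg : v + g = 0
    · have hx : v + 2 • g = -v := by
        rw [hexp, hvg]
        have : g = -v := by linear_combination (norm := abel) hvg
        rw [this]; abel
      rw [hx]
      have hBv : B (-v) (-v) = k := by simp [hk]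
      refine ⟨by simpa using hv, le_of_eq hBv.symm, by tauto⟩
    · -- generic case: norm is at least 3k
      have e1 : B (v + 2 • g) (v + 2 • g)
          = 2 * B (v + g) (v + g) + 2 * B g g - B v v := by
        rw [hexp]
        simp only [map_add, LinearMap.add_apply]
        linarith [hsymm v g]
      have h1 : k ≤ B (v + g) (v + g) := hmin _ hvg
      have h2 : k ≤ B g g := hmin _ hg
      have hge : 3 * k ≤ B (v + 2 • g) (v + 2 • g) := by
        rw [e1, hk]; linarith
      have hne : v + 2 • g ≠ 0 := by
        intro h0
        rw [h0] at hge
        simp at hge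
        linarith
      refine ⟨hne, by linarith, ?_⟩
      constructor
      · intro h; linarith
      · rintro (h | h)
        · have : g = 0 := by
            have hv0 : v + 2 • g = v + 0 := by simpa using h
            have h2g : g + g = 0 := by
              have := add_left_cancel hv0
              rw [two_smul] at this; exact this
            rcases hpos g hg with _
            by_contra hgn
            have := hpos g hg
            have hBgg : B (g + g) (g + g) = 0 := by rw [h2g]; simp
            simp only [map_add, LinearMap.add_apply] at hBgg
            linarith [hsymm g g]
          exact absurd this hg
        · exfalso
          apply hvg
          have : v + g + g = -v := by rw [← hexp]; exact h
          have h2 : (v + g) + (v + g) = 0 := by linear_combination (norm := abel) this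
          by_contra hvgn
          have hp := hpos _ hvgn
          simp only [map_add, LinearMap.add_apply] at hp
          have hB : B ((v+g)+(v+g)) ((v+g)+(v+g)) = 0 := by rw [h2]; simp
          simp only [map_add, LinearMap.add_apply] at hB
          linarith
end

section
/- Let M be an abelian group equipped with a symmetric bilinear form B : M × M → ℤ which is positive definite, i.e. B(x,x) > 0 for every x ≠ 0. Let v ∈ M be an element whose square norm k := B(v,v) is odd and minimal among all elements of odd square norm: B(u,u) ≥ k for every u ∈ M with B(u,u) odd. Then every element x of the coset v + 2M has odd square norm B(x,x) ≥ k, and B(x,x) = k holds if and only if x = v or x = −v. -/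
/-- In a positive definite integral lattice, if `v` has odd square norm `k`, minimal
among all elements of odd square norm, then every element of the coset `v + 2M`
has odd square norm at least `k`, with equality exactly for `±v`. -/
theorem coset_min_odd_norm_elements
    (M : Type*) [AddCommGroup M]
    (B : M →ₗ[ℤ] M →ₗ[ℤ] ℤ)
    (hsymm : ∀ x y : M, B x y = B y x)
    (hpos : ∀ x : M, x ≠ 0 → 0 < B x x)
    (v : M) (k : ℤ) (hk : k = B v v) (hodd : Odd k)
    (hmin : ∀ u : M, Odd (B u u) → k ≤ B u u) :
    ∀ g : M, Odd (B (v + 2 • g) (v + 2 • g)) ∧ k ≤ B (v + 2 • g) (v + 2 • g) ∧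
      (B (v + 2 • g) (v + 2 • g) = k ↔ (v + 2 • g = v ∨ v + 2 • g = -v)) := by
  intro g
  have h2 : (2 : ℕ) • g = g + g := two_nsmul g
  have hx : B (v + 2 • g) (v + 2 • g) = B v v + 4 * B v g + 4 * B g g := by
    rw [h2]
    simp only [map_add, LinearMap.add_apply]
    have h1 := hsymm g v
    linarith
  have hsum : B (v + g) (v + g) + B g g = B (v + 2 • g) (v + 2 • g) - 2 * B (v + g) g := by
    simp only [map_add, LinearMap.add_apply] at *
    have h1 := hsymm g v
    linarith
  have hoddx : Odd (B (v + 2 • g) (v + 2 • g)) := by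
    rw [hx, ← hk]
    rcases hodd with ⟨m, hm⟩
    exact ⟨m + 2 * B v g + 2 * B g g, by linarith⟩
  have hge : k ≤ B (v + 2 • g) (v + 2 • g) := hmin _ hoddx
  refine ⟨hoddx, hge, ?_, ?_⟩
  · intro heq
    -- B (v+g) g = 0
    have hkey : B (v + g) g = 0 := by
      rw [hx, ← hk] at heq
      -- k + 4 Bvg + 4 Bgg = k
      simp only [map_add, LinearMap.add_apply]
      linarith
    have hsum' : B (v + g) (v + g) + B g g = k := by
      rw [hsum, heq, hkey]; ring
    rcases Int.even_or_odd (B g g) with he | ho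
    · -- B (v+g)(v+g) odd
      have hodd1 : Odd (B (v + g) (v + g)) := by
        have : Odd (B (v + g) (v + g) + B g g) := hsum' ▸ hodd
        rcases he with ⟨m, hm⟩
        rcases this with ⟨n, hn⟩
        exact ⟨n - m, by omega⟩
      have h1 := hmin _ hodd1
      have hg0 : g = 0 := by
        by_contra hne
        have := hpos g hne
        linarith
      left; rw [hg0]; simp
    · have h1 := hmin _ ho
      have hvg0 : v + g = 0 := by
        by_contra hne
        have := hpos _ hne
        linarith
      right
      have hg : g = -v := by
        have h' : g = -v := by
          have := hvg0
          rw [add_comm] at this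
          exact add_eq_zero_iff_eq_neg.mp this
        exact h'
      rw [hg, two_nsmul]
      abel
  · rintro (h | h)
    · rw [h, ← hk]
    · rw [h]
      simp only [map_neg, LinearMap.neg_apply, neg_neg, ← hk]
end

section
/- Fix an integer k ≥ 1 and set n := 4k. Let Γ ⊆ ℚⁿ be the set of vectors x = (x₁,…,xₙ) such that 2xᵢ ∈ ℤ for every i, xᵢ − xⱼ ∈ ℤ for all i, j, and Σᵢ xᵢ ∈ 2ℤ, and let w := (1/2, 1/2, …, 1/2) ∈ ℚⁿ. Then for every γ ∈ Γ the vector x := w + 2γ satisfies Σᵢ xᵢ² ≥ k, with equality if and only if x = w or x = −w. (In particular −w ∈ w + 2Γ, and ±w, of square norm exactly k, are the only elements of minimal square norm in the coset w + 2Γ.) -/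
/-- In the lattice `Γ_{4k} ⊆ ℚ^{4k}`, the coset `w + 2Γ` of `w = (1/2,…,1/2)`
has all square norms `≥ k` with equality exactly at `±w`; moreover `-w ∈ w + 2Γ`. -/
theorem Gamma4k_minimal_vectors
    (k : ℕ) (hk : 1 ≤ k)
    (Γ : Set (Fin (4 * k) → ℚ))
    (hΓ : Γ = {x | (∀ i, ∃ m : ℤ, 2 * x i = (m : ℚ)) ∧
      (∀ i j, ∃ m : ℤ, x i - x j = (m : ℚ)) ∧
      (∃ m : ℤ, ∑ i, x i = 2 * (m : ℚ))})
    (w : Fin (4 * k) → ℚ) (hw : w = fun _ => 1 / 2) :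
    (∀ γ ∈ Γ, (k : ℚ) ≤ ∑ i, (w i + 2 * γ i) ^ 2 ∧
      ((∑ i, (w i + 2 * γ i) ^ 2 = (k : ℚ)) ↔
        (w + 2 • γ = w ∨ w + 2 • γ = -w))) ∧
    (∃ γ ∈ Γ, -w = w + 2 • γ) := by
  subst hΓ hw
  have hk4 : ∑ _i : Fin (4 * k), (1/4 : ℚ) = (k : ℚ) := by
    simp [Finset.sum_const, Finset.card_univ]
    ring
  constructor
  · rintro γ ⟨h1, h2, h3⟩
    have key : ∀ i, (1/4 : ℚ) ≤ ((fun _ => (1:ℚ)/2) i + 2 * γ i) ^ 2 := by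
      intro i
      obtain ⟨m, hm⟩ := h1 i
      have hγ : γ i = (m : ℚ) / 2 := by linarith
      have h0 : (0:ℤ) ≤ m ^ 2 + m := by
        rcases le_or_gt 0 m with h | h
        · nlinarith
        · have h' : m ≤ -1 := by omega
          nlinarith
      have h0' : (0:ℚ) ≤ (m:ℚ) ^ 2 + m := by exact_mod_cast h0
      simp only [hγ]
      nlinarith
    have hsum : (k : ℚ) ≤ ∑ i, ((fun _ => (1:ℚ)/2) i + 2 * γ i) ^ 2 := by
      calc (k : ℚ) = ∑ _i : Fin (4*k), (1/4 : ℚ) := hk4.symm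
        _ ≤ _ := Finset.sum_le_sum fun i _ => key i
    refine ⟨hsum, ?_, ?_⟩
    · intro heq
      have hall := (Finset.sum_eq_sum_iff_of_le (fun i (_ : i ∈ Finset.univ) => key i)).mp
        (hk4.trans heq.symm)
      have hx : ∀ i, γ i = 0 ∨ γ i = -(1/2) := by
        intro i
        have h := hall i (Finset.mem_univ i)
        simp only at h
        have hfac : (2 * γ i) * (2 * γ i + 1) = 0 := by nlinarith
        rcases mul_eq_zero.mp hfac with h' | h'
        · left; linarith
        · right; linarith
      have hpos : 0 < 4 * k := by omega
      set i0 : Fin (4 * k) := ⟨0, hpos⟩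
      have nohalf : ∀ (a b : ℚ), a = 0 → b = -(1/2) →
          (∃ m : ℤ, a - b = (m : ℚ)) → False := by
        rintro a b ha hb ⟨m, hm⟩
        rw [ha, hb] at hm
        have : (2 * m : ℤ) = 1 := by
          have : (2 * m : ℚ) = 1 := by linarith
          exact_mod_cast this
        omega
      rcases hx i0 with h0 | h0
      · left
        funext i
        rcases hx i with hi | hi
        · simp [hi]
        · exact absurd (h2 i0 i) (fun h => (nohalf _ _ h0 hi h))
      · right
        funext i
        rcases hx i with hi | hi
        · exact absurd (h2 i i0) (fun h => (nohalf _ _ hi h0 h))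
        · simp only [Pi.add_apply, Pi.smul_apply, Pi.neg_apply, hi]
          norm_num
    · rintro (heq | heq)
      · have hz : ∀ i, γ i = 0 := by
          intro i
          have := congrFun heq i
          simp only [Pi.add_apply, Pi.smul_apply] at this
          have h2' : (2:ℚ) * γ i = 0 := by
            have : ((1:ℚ)/2) + 2 • γ i = 1/2 := this
            simpa [smul_eq_mul] using this
          linarith
        calc ∑ i, ((fun _ => (1:ℚ)/2) i + 2 * γ i) ^ 2
            = ∑ _i : Fin (4*k), (1/4 : ℚ) := by
              apply Finset.sum_congr rfl
              intro i _
              simp [hz i]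
              norm_num
          _ = (k : ℚ) := hk4
      · have hz : ∀ i, γ i = -(1/2) := by
          intro i
          have := congrFun heq i
          simp only [Pi.add_apply, Pi.smul_apply, Pi.neg_apply] at this
          have h2' : ((1:ℚ)/2) + 2 * γ i = -(1/2) := by
            simpa [smul_eq_mul] using this
          linarith
        calc ∑ i, ((fun _ => (1:ℚ)/2) i + 2 * γ i) ^ 2
            = ∑ _i : Fin (4*k), (1/4 : ℚ) := by
              apply Finset.sum_congr rfl
              intro i _
              simp only [hz i]
              norm_num
          _ = (k : ℚ) := hk4
  · refine ⟨fun _ => -(1/2), ⟨?_, ?_, ?_⟩, ?_⟩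
    · intro i; exact ⟨-1, by norm_num⟩
    · intro i j; exact ⟨0, by norm_num⟩
    · refine ⟨-k, ?_⟩
      simp [Finset.sum_const, Finset.card_univ]
      ring
    · funext i
      simp only [Pi.neg_apply, Pi.add_apply, Pi.smul_apply, smul_eq_mul]
      norm_num
end

section
/- Let b : ℝ → ℝ be a function with b(t) = 0 for t ≤ −1, b(t) = 1 for t ≥ 1, b(0) = 1/2, and b strictly increasing on the interval [−1, 1]. Let e₁, e₂, e₃ be the standard orthonormal basis of Euclidean ℝ³, let H be a real 3×3 orthogonal matrix with det H = 1, and let v, w ∈ ℝ. Suppose that (1 − b(v))·(H e₁) − b(v)·e₁ = 0 and that the two vectors F₂ := (1 − b(w))·(H e₁) + b(w)·e₁ and F₃ := (1 − b(w))·(H e₂) − b(w)·e₂ are linearly dependent. Then H is the identity matrix, v = 0, and w = 0. -/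
open Matrix

/-- The fiber computation in the Claim of the proof of Proposition 9.1: for the special
pair of matrices, the only solution `(H, v, w)` of the gluing equations is `(I, 0, 0)`. -/
theorem Zprime_single_point
    (b : ℝ → ℝ)
    (hb0 : ∀ t : ℝ, t ≤ -1 → b t = 0)
    (hb1 : ∀ t : ℝ, 1 ≤ t → b t = 1)
    (hbhalf : b 0 = 1 / 2)
    (hbmono : StrictMonoOn b (Set.Icc (-1 : ℝ) 1))
    (e : Fin 3 → Fin 3 → ℝ) (he : ∀ i, e i = Pi.single i 1)
    (H : Matrix (Fin 3) (Fin 3) ℝ)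
    (hH : Hᵀ * H = 1) (hdet : H.det = 1)
    (v w : ℝ)
    (h1 : (1 - b v) • H.mulVec (e 0) - b v • e 0 = 0)
    (hdep : ¬ LinearIndependent ℝ
      ![(1 - b w) • H.mulVec (e 0) + b w • e 0,
        (1 - b w) • H.mulVec (e 1) - b w • e 1]) :
    H = 1 ∧ v = 0 ∧ w = 0 := by
  -- orthogonality of columns
  have ortho : ∀ i j : Fin 3,
      H 0 i * H 0 j + H 1 i * H 1 j + H 2 i * H 2 j = if i = j then 1 else 0 := by
    intro i j
    have h := congrFun (congrFun hH i) j
    simpa [Matrix.mul_apply, Matrix.transpose_apply, Fin.sum_univ_three,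
      Matrix.one_apply] using h
  -- components of h1
  have h10 := congrFun h1 0
  have h11 := congrFun h1 1
  have h12 := congrFun h1 2
  simp [Matrix.mulVec, dotProduct, he, Fin.sum_univ_three, Pi.single_apply,
    sub_eq_zero] at h10 h11 h12
  -- b v ≠ 1
  have hA1 : b v ≠ 1 := by
    intro hA
    rw [hA] at h10
    norm_num at h10
  have hA1' : 1 - b v ≠ 0 := sub_ne_zero.mpr (Ne.symm hA1)
  have hH10 : H 1 0 = 0 := h11.resolve_left (Ne.symm hA1)
  have hH20 : H 2 0 = 0 := h12.resolve_left (Ne.symm hA1)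
  have o00 := ortho 0 0
  simp [hH10, hH20] at o00
  have hH00 : H 0 0 = 1 := by
    have hsq : (H 0 0 - 1) * (H 0 0 + 1) = 0 := by nlinarith
    rcases mul_eq_zero.mp hsq with h | h
    · linarith
    · exfalso
      have : H 0 0 = -1 := by linarith
      rw [this] at h10
      linarith
  have hA : b v = 1 / 2 := by
    rw [hH00] at h10; linarith
  -- v = 0 via strict monotonicity
  have vval : ∀ (t : ℝ), b t = 1/2 → t = 0 := by
    intro t ht
    rcases le_or_gt t (-1) with h | h
    · rw [hb0 t h] at ht; norm_num at ht
    rcases le_or_gt 1 t with h' | h'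
    · rw [hb1 t h'] at ht; norm_num at ht
    have ht' : b t = b 0 := by rw [ht, hbhalf]
    exact hbmono.injOn (Set.mem_Icc.mpr ⟨le_of_lt h, le_of_lt h'⟩)
      (by norm_num) ht'
  have hv : v = 0 := vval v hA
  -- first row zeros
  have o01 := ortho 0 1
  have o02 := ortho 0 2
  simp [hH00, hH10, hH20] at o01 o02
  -- use the dependence
  rw [LinearIndependent.pair_iff] at hdep
  push_neg at hdep
  obtain ⟨s, t, heq, hst⟩ := hdep
  have heq0 := congrFun heq 0
  have heq1 := congrFun heq 1
  have heq2 := congrFun heq 2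
  simp [Matrix.mulVec, dotProduct, he, Fin.sum_univ_three, Pi.single_apply,
    hH00, hH10, hH20, o01] at heq0 heq1 heq2
  -- heq0 : s * ((1 - b w) * 1 + b w) + t * ((1-b w)*0 - 0) = 0, so s = 0
  have hs : s = 0 := by linear_combination heq0
  have ht : t ≠ 0 := hst hs
  have f1 : (1 - b w) * H 1 1 - b w = 0 := heq1.resolve_left ht
  have hB1 : b w ≠ 1 := by
    intro hB
    rw [hB] at f1
    norm_num at f1
  have hB1' : 1 - b w ≠ 0 := sub_ne_zero.mpr (Ne.symm hB1)
  have hH21 : H 2 1 = 0 := (heq2.resolve_left ht).resolve_left hB1'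
  have o11 := ortho 1 1
  simp [o01, hH21] at o11
  have hH11 : H 1 1 = 1 := by
    have hsq : (H 1 1 - 1) * (H 1 1 + 1) = 0 := by nlinarith
    rcases mul_eq_zero.mp hsq with h | h
    · linarith
    · exfalso
      have : H 1 1 = -1 := by linarith
      rw [this] at f1
      linarith
  have hB : b w = 1 / 2 := by
    rw [hH11] at f1; linarith
  have hw : w = 0 := vval w hB
  -- remaining entries
  have o12 := ortho 1 2
  simp [o01, o02, hH11, hH21] at o12
  have o22 := ortho 2 2
  simp [o02, o12] at o22
  have hdet3 := Matrix.det_fin_three H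
  rw [hdet, hH00, hH10, hH20, o01, o02, hH11, hH21, o12] at hdet3
  have hH22 : H 2 2 = 1 := by linarith [hdet3]
  refine ⟨?_, hv, hw⟩
  ext i j
  fin_cases i <;> fin_cases j <;>
    simp [hH00, hH10, hH20, o01, o02, hH11, hH21, o12, hH22, Matrix.one_apply]
end

section
/- Let E and V be real vector spaces, L₁, L₂ : E → V linear maps, v₁, v₂ ∈ V not both zero, and x₁, x₂ ∈ ℝ with x₁² + x₂² = 1 and x₁·v₁ + x₂·v₂ = 0. Set w := x₁·v₂ − x₂·v₁. Then the following are equivalent: (a) V × V is spanned by the set of vectors (L₁ e, L₂ e) for e ∈ E, together with the vectors (−x₂·u, x₁·u) for u ∈ V, together with the single vector (x₁·w, x₂·w); (b) V is spanned by w together with the image of the linear map x₁·L₁ + x₂·L₂. -/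
/-- The transversality computation in the proof of Proposition 4.1(ii): the spanning
condition (a) in `V × V` is equivalent to the spanning condition (b) in `V`. -/
theorem regular_zero_iff_transverse
    (E V : Type*) [AddCommGroup E] [Module ℝ E] [AddCommGroup V] [Module ℝ V]
    (L₁ L₂ : E →ₗ[ℝ] V)
    (v₁ v₂ : V) (hv : ¬(v₁ = 0 ∧ v₂ = 0))
    (x₁ x₂ : ℝ) (hx : x₁ ^ 2 + x₂ ^ 2 = 1)
    (hlin : x₁ • v₁ + x₂ • v₂ = 0)
    (w : V) (hw : w = x₁ • v₂ - x₂ • v₁) :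
    (Submodule.span ℝ
        ({p : V × V | ∃ e : E, p = (L₁ e, L₂ e)} ∪
         {p : V × V | ∃ u : V, p = (-x₂ • u, x₁ • u)} ∪
         {((x₁ • w, x₂ • w) : V × V)}) = ⊤)
    ↔ (Submodule.span ℝ
        (insert w (Set.range (x₁ • L₁ + x₂ • L₂ : E →ₗ[ℝ] V))) = ⊤) := by
  set L : E →ₗ[ℝ] V := x₁ • L₁ + x₂ • L₂ with hL
  set P : V × V →ₗ[ℝ] V := x₁ • LinearMap.fst ℝ V V + x₂ • LinearMap.snd ℝ V V with hP
  set S : Set (V × V) :=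
    {p : V × V | ∃ e : E, p = (L₁ e, L₂ e)} ∪
      {p : V × V | ∃ u : V, p = (-x₂ • u, x₁ • u)} ∪ {((x₁ • w, x₂ • w) : V × V)} with hS
  have hPapp : ∀ p : V × V, P p = x₁ • p.1 + x₂ • p.2 := fun p => rfl
  have hPsurj : Function.Surjective P := by
    intro v
    refine ⟨(x₁ • v, x₂ • v), ?_⟩
    rw [hPapp]
    simp only [smul_smul]
    rw [← add_smul]
    rw [show x₁ * x₁ + x₂ * x₂ = 1 by nlinarith [hx], one_smul]
  have key : Submodule.span ℝ (P '' S) = Submodule.span ℝ (insert w (Set.range L)) := by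
    apply le_antisymm
    · rw [Submodule.span_le]
      rintro _ ⟨p, hp, rfl⟩
      rcases hp with (⟨e, rfl⟩ | ⟨u, rfl⟩) | rfl
      · apply Submodule.subset_span
        right
        exact ⟨e, rfl⟩
      · have : P (-x₂ • u, x₁ • u) = 0 := by
          rw [hPapp]; simp [smul_smul]; module
        rw [this]; exact Submodule.zero_mem _
      · have : P (x₁ • w, x₂ • w) = w := by
          rw [hPapp]
          simp only [smul_smul, ← add_smul]
          rw [show x₁ * x₁ + x₂ * x₂ = 1 by nlinarith [hx], one_smul]
        rw [this]
        exact Submodule.subset_span (Set.mem_insert _ _)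
    · rw [Submodule.span_le]
      rintro y hy
      rcases Set.mem_insert_iff.mp hy with rfl | ⟨e, rfl⟩
      · apply Submodule.subset_span
        refine ⟨(x₁ • y, x₂ • y), Or.inr rfl, ?_⟩
        rw [hPapp]
        simp only [smul_smul, ← add_smul]
        rw [show x₁ * x₁ + x₂ * x₂ = 1 by nlinarith [hx], one_smul]
      · apply Submodule.subset_span
        refine ⟨(L₁ e, L₂ e), Or.inl (Or.inl ⟨e, rfl⟩), ?_⟩
        rw [hPapp, hL]; rfl
  constructor
  · intro h
    have h2 := congrArg (Submodule.map P) h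
    rwa [Submodule.map_span, key, Submodule.map_top,
      LinearMap.range_eq_top.mpr hPsurj] at h2
  · intro h
    have hker : LinearMap.ker P ≤ Submodule.span ℝ S := by
      intro p hp
      have hp' : x₁ • p.1 + x₂ • p.2 = 0 := hp
      apply Submodule.subset_span
      left; right
      refine ⟨x₁ • p.2 - x₂ • p.1, ?_⟩
      have h1 : p.1 = -x₂ • (x₁ • p.2 - x₂ • p.1) := by
        linear_combination (norm := module) x₁ • hp' - hx • p.1
      have h2 : p.2 = x₁ • (x₁ • p.2 - x₂ • p.1) := by
        linear_combination (norm := module) x₂ • hp' - hx • p.2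
      exact Prod.ext h1 h2
    have hmap : Submodule.map P (Submodule.span ℝ S) = ⊤ := by
      rw [Submodule.map_span, key, h]
    have h3 := Submodule.comap_map_eq P (Submodule.span ℝ S)
    rw [hmap, Submodule.comap_top, sup_eq_left.mpr hker] at h3
    exact h3.symm
end

section
/- Let C₀, C₁, C₂ be vector spaces over the field 𝔽₂ with two elements; let d₀, d₁, d₂ be linear endomorphisms of C₀, C₁, C₂ respectively, and let v₀ : C₀ → C₀ and v₁ : C₁ → C₁ be linear maps. Let A, B : C₀ × C₁ → C₂ be 𝔽₂-bilinear maps such that for all x ∈ C₀ and y ∈ C₁: d₂(A(x,y)) = A(d₀x, y) + A(x, d₁y), and d₂(B(x,y)) + B(d₀x, y) + B(x, d₁y) = A(v₀x, y) + A(x, v₁y). For i = 0, 1 define Dᵢ : Cᵢ × Cᵢ → Cᵢ × Cᵢ by Dᵢ(x,y) := (dᵢx, vᵢx + dᵢy), and define 𝓛 : (C₀ × C₀) × (C₁ × C₁) → C₂ by 𝓛((x₀,y₀),(x₁,y₁)) := B(x₀,x₁) + A(x₀,y₁) + A(y₀,x₁). Then for all g₀ ∈ C₀ × C₀ and g₁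 ∈ C₁ × C₁: d₂(𝓛(g₀,g₁)) = 𝓛(D₀g₀, g₁) + 𝓛(g₀, D₁g₁). -/
/-- Proposition 8.3 (algebraic content): the pairing `𝓛` built from the cobordism
operators `A`, `B` is a cochain map from the tensor product of the mapping cones. -/
theorem pairing_is_cochain_map
    (C₀ C₁ C₂ : Type*)
    [AddCommGroup C₀] [Module (ZMod 2) C₀]
    [AddCommGroup C₁] [Module (ZMod 2) C₁]
    [AddCommGroup C₂] [Module (ZMod 2) C₂]
    (d₀ : C₀ →ₗ[ZMod 2] C₀) (d₁ : C₁ →ₗ[ZMod 2] C₁) (d₂ : C₂ →ₗ[ZMod 2] C₂)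
    (v₀ : C₀ →ₗ[ZMod 2] C₀) (v₁ : C₁ →ₗ[ZMod 2] C₁)
    (A B : C₀ →ₗ[ZMod 2] C₁ →ₗ[ZMod 2] C₂)
    (hA : ∀ (x : C₀) (y : C₁), d₂ (A x y) = A (d₀ x) y + A x (d₁ y))
    (hB : ∀ (x : C₀) (y : C₁),
      d₂ (B x y) + B (d₀ x) y + B x (d₁ y) = A (v₀ x) y + A x (v₁ y))
    (D₀ : C₀ × C₀ → C₀ × C₀) (hD₀ : ∀ p : C₀ × C₀, D₀ p = (d₀ p.1, v₀ p.1 + d₀ p.2))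
    (D₁ : C₁ × C₁ → C₁ × C₁) (hD₁ : ∀ p : C₁ × C₁, D₁ p = (d₁ p.1, v₁ p.1 + d₁ p.2))
    (L : C₀ × C₀ → C₁ × C₁ → C₂)
    (hL : ∀ (g₀ : C₀ × C₀) (g₁ : C₁ × C₁),
      L g₀ g₁ = B g₀.1 g₁.1 + A g₀.1 g₁.2 + A g₀.2 g₁.1) :
    ∀ (g₀ : C₀ × C₀) (g₁ : C₁ × C₁),
      d₂ (L g₀ g₁) = L (D₀ g₀) g₁ + L g₀ (D₁ g₁) := by
  have hB' : ∀ (x : C₀) (y : C₁),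
      d₂ (B x y) = A (v₀ x) y + A x (v₁ y) + B (d₀ x) y + B x (d₁ y) := by
    intro x y
    have h2 : ∀ a : C₂, a + a = 0 := by
      intro a
      have : (2 : ZMod 2) • a = 0 := by
        rw [show (2 : ZMod 2) = 0 from rfl, zero_smul]
      simpa [two_smul] using this
    have h := hB x y
    have := congrArg (· + (B (d₀ x) y + B x (d₁ y))) h
    calc d₂ (B x y)
        = d₂ (B x y) + (B (d₀ x) y + B (d₀ x) y) + (B x (d₁ y) + B x (d₁ y)) := by
          rw [h2, h2]; abel
      _ = d₂ (B x y) + B (d₀ x) y + B x (d₁ y) + (B (d₀ x) y + B x (d₁ y)) := by abel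
      _ = A (v₀ x) y + A x (v₁ y) + B (d₀ x) y + B x (d₁ y) := by rw [h]; abel
  intro g₀ g₁
  obtain ⟨x₀, y₀⟩ := g₀
  obtain ⟨x₁, y₁⟩ := g₁
  simp only [hL, hD₀, hD₁, map_add, hA, hB', LinearMap.add_apply]
  abel
end

section
/- Let C and C′ be vector spaces over the field 𝔽₂ with two elements. Let d, v, v₂, ψ, Ξ be linear endomorphisms of C, let d′, v′ be linear endomorphisms of C′, and let q, a, b, e, ē, f, A₂, E₂ : C → C′ be linear maps. Assume the following eight relations of linear maps: d′∘q = q∘d; d′∘a + a∘d = A₂; d′∘b + b∘d = q∘v + A₂; d′∘e + e∘d = q∘v + v′∘q; d′∘ē + ē∘d = E₂ + a∘v + v′∘a; d′∘f + f∘d = b∘v + v′∘b + e∘v + E₂ + q∘ψ; ψ = v₂∘v + d∘Ξ + Ξ∘d; d∘v₂ = v₂∘d. Define D : C × C → C × C by D(x,y) := (d x, v x + d y), D′ : C′ × C′ → C′ × C′ by D′(x′,y′) := (d′ x′, v′ x′ + d′ y′), and K : C × C → C′ × C′ by K(x,y) := ( a(x) + b(x) + q(y) , ē(x) + f(x) +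 q(Ξ x) + a(y) + b(y) + e(y) + q(v₂ y) ). Then D′ ∘ K = K ∘ D. -/
/-- Lemma 8.12 (algebraic content): the 2×2 matrix `K` is a cochain map between the
mapping cones of `v` and `v′`. -/
theorem K_is_cochain_map
    (C C' : Type*) [AddCommGroup C] [Module (ZMod 2) C]
    [AddCommGroup C'] [Module (ZMod 2) C']
    (d v v₂ ψ Ξ : C →ₗ[ZMod 2] C)
    (d' v' : C' →ₗ[ZMod 2] C')
    (q a b e ebar f A₂ E₂ : C →ₗ[ZMod 2] C')
    (h1 : d' ∘ₗ q = q ∘ₗ d)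
    (h2 : d' ∘ₗ a + a ∘ₗ d = A₂)
    (h3 : d' ∘ₗ b + b ∘ₗ d = q ∘ₗ v + A₂)
    (h4 : d' ∘ₗ e + e ∘ₗ d = q ∘ₗ v + v' ∘ₗ q)
    (h5 : d' ∘ₗ ebar + ebar ∘ₗ d = E₂ + a ∘ₗ v + v' ∘ₗ a)
    (h6 : d' ∘ₗ f + f ∘ₗ d = b ∘ₗ v + v' ∘ₗ b + e ∘ₗ v + E₂ + q ∘ₗ ψ)
    (h7 : ψ = v₂ ∘ₗ v + d ∘ₗ Ξ + Ξ ∘ₗ d)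
    (h8 : d ∘ₗ v₂ = v₂ ∘ₗ d)
    (D : C × C → C × C) (hD : ∀ p : C × C, D p = (d p.1, v p.1 + d p.2))
    (D' : C' × C' → C' × C') (hD' : ∀ p : C' × C', D' p = (d' p.1, v' p.1 + d' p.2))
    (K : C × C → C' × C')
    (hK : ∀ p : C × C, K p =
      (a p.1 + b p.1 + q p.2,
       ebar p.1 + f p.1 + q (Ξ p.1) + a p.2 + b p.2 + e p.2 + q (v₂ p.2))) :
    ∀ p : C × C, D' (K p) = K (D p) := by
  simp only [LinearMap.ext_iff, LinearMap.add_apply, LinearMap.comp_apply] at h1 h2 h3 h4 h5 h6 h8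
  rintro ⟨x, y⟩
  have pq : ∀ z, d' (q z) = q (d z) := h1
  have pa : ∀ z, d' (a z) = A₂ z - a (d z) := fun z => by
    rw [eq_sub_iff_add_eq]; exact h2 z
  have pb : ∀ z, d' (b z) = q (v z) + A₂ z - b (d z) := fun z => by
    rw [eq_sub_iff_add_eq]; exact h3 z
  have pe : ∀ z, d' (e z) = q (v z) + v' (q z) - e (d z) := fun z => by
    rw [eq_sub_iff_add_eq]; exact h4 z
  have pebar : ∀ z, d' (ebar z) = E₂ z + a (v z) + v' (a z) - ebar (d z) := fun z => by
    rw [eq_sub_iff_add_eq]; exact h5 z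
  have pf : ∀ z, d' (f z) =
      b (v z) + v' (b z) + e (v z) + E₂ z + q (v₂ (v z)) + q (d (Ξ z)) + q (Ξ (d z))
        - f (d z) := fun z => by
    rw [eq_sub_iff_add_eq]
    have := h6 z
    rw [h7] at this
    simpa [add_assoc] using this
  simp only [hD, hD', hK, map_add]
  have two : ∀ z : C', (2:ℤ) • z = 0 := fun z => by
    have h2 : ((2:ZMod 2)) = 0 := by decide
    rw [two_smul, ← two_smul (ZMod 2), h2, zero_smul]
  have ntwo : ∀ z : C', (-2:ℤ) • z = 0 := fun z => by
    have := two z; rw [show ((-2:ℤ)) = -(2:ℤ) by norm_num, neg_smul, this, neg_zero]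
  simp only [Prod.mk.injEq]
  constructor
  · simp only [pa, pb, pq]
    rw [← sub_eq_zero]
    abel_nf
    simp [two, ntwo]
  · simp only [pebar, pf, pq, pa, pb, pe, h8]
    rw [← sub_eq_zero]
    abel_nf
    simp [two, ntwo]
end

section
/- Let C₀, C₁, C₂ be vector spaces over the field 𝔽₂ with two elements, with linear endomorphisms d₀, d₁, d₂ respectively; let v₀ : C₀ → C₀, v₁ : C₁ → C₁ and u : C₂ → C₂ be linear maps. Let A, B, Ȧ, Ḃ, A⁺, B⁺ : C₀ × C₁ → C₂ be 𝔽₂-bilinear maps satisfying, for all x ∈ C₀, y ∈ C₁: d₂(A⁺(x,y)) + A⁺(d₀x, y) + A⁺(x, d₁y) = u(A(x,y)) + Ȧ(x,y), and d₂(B⁺(x,y)) + B⁺(d₀x, y) + B⁺(x, d₁y) = A⁺(v₀x, y) + A⁺(x, v₁y) + u(B(x,y)) + Ḃ(x,y). For i = 0, 1 define Dᵢ(x,y) := (dᵢx, vᵢx + dᵢy) on Cᵢ × Cᵢ, and for a pair of bilinear maps (G, F) define the pairing 𝓛_{G,F}((x₀,y₀),(x₁,y₁)) := G(x₀,x₁)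 + F(x₀,y₁) + F(y₀,x₁); write 𝓛 := 𝓛_{B,A}, 𝓛̇ := 𝓛_{Ḃ,Ȧ}, 𝓛⁺ := 𝓛_{B⁺,A⁺}. Then for all g₀ ∈ C₀ × C₀ and g₁ ∈ C₁ × C₁: d₂(𝓛⁺(g₀,g₁)) + 𝓛⁺(D₀g₀, g₁) + 𝓛⁺(g₀, D₁g₁) = u(𝓛(g₀,g₁)) + 𝓛̇(g₀,g₁). In particular, if D₀g₀ = 0 and D₁g₁ = 0, then u(𝓛(g₀,g₁)) + 𝓛̇(g₀,g₁) lies in the image of d₂. -/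
/-- Proposition 8.8 (algebraic content): `𝓛⁺` is a chain homotopy between `u ∘ 𝓛`
and `𝓛̇` on the tensor product of mapping cones; in particular on cocycles
`u(𝓛(g₀,g₁)) + 𝓛̇(g₀,g₁)` is a coboundary. -/
theorem Lplus_chain_homotopy
    (C₀ C₁ C₂ : Type*)
    [AddCommGroup C₀] [Module (ZMod 2) C₀]
    [AddCommGroup C₁] [Module (ZMod 2) C₁]
    [AddCommGroup C₂] [Module (ZMod 2) C₂]
    (d₀ : C₀ →ₗ[ZMod 2] C₀) (d₁ : C₁ →ₗ[ZMod 2] C₁) (d₂ : C₂ →ₗ[ZMod 2] C₂)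
    (v₀ : C₀ →ₗ[ZMod 2] C₀) (v₁ : C₁ →ₗ[ZMod 2] C₁) (u : C₂ →ₗ[ZMod 2] C₂)
    (A B Adot Bdot Aplus Bplus : C₀ →ₗ[ZMod 2] C₁ →ₗ[ZMod 2] C₂)
    (hAplus : ∀ (x : C₀) (y : C₁),
      d₂ (Aplus x y) + Aplus (d₀ x) y + Aplus x (d₁ y) = u (A x y) + Adot x y)
    (hBplus : ∀ (x : C₀) (y : C₁),
      d₂ (Bplus x y) + Bplus (d₀ x) y + Bplus x (d₁ y) =
        Aplus (v₀ x) y + Aplus x (v₁ y) + u (B x y) + Bdot x y)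
    (D₀ : C₀ × C₀ → C₀ × C₀) (hD₀ : ∀ p : C₀ × C₀, D₀ p = (d₀ p.1, v₀ p.1 + d₀ p.2))
    (D₁ : C₁ × C₁ → C₁ × C₁) (hD₁ : ∀ p : C₁ × C₁, D₁ p = (d₁ p.1, v₁ p.1 + d₁ p.2))
    (L Ldot Lplus : C₀ × C₀ → C₁ × C₁ → C₂)
    (hL : ∀ (g₀ : C₀ × C₀) (g₁ : C₁ × C₁),
      L g₀ g₁ = B g₀.1 g₁.1 + A g₀.1 g₁.2 + A g₀.2 g₁.1)
    (hLdot : ∀ (g₀ : C₀ × C₀) (g₁ : C₁ × C₁),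
      Ldot g₀ g₁ = Bdot g₀.1 g₁.1 + Adot g₀.1 g₁.2 + Adot g₀.2 g₁.1)
    (hLplus : ∀ (g₀ : C₀ × C₀) (g₁ : C₁ × C₁),
      Lplus g₀ g₁ = Bplus g₀.1 g₁.1 + Aplus g₀.1 g₁.2 + Aplus g₀.2 g₁.1) :
    (∀ (g₀ : C₀ × C₀) (g₁ : C₁ × C₁),
      d₂ (Lplus g₀ g₁) + Lplus (D₀ g₀) g₁ + Lplus g₀ (D₁ g₁) =
        u (L g₀ g₁) + Ldot g₀ g₁) ∧
    (∀ (g₀ : C₀ × C₀) (g₁ : C₁ × C₁), D₀ g₀ = 0 → D₁ g₁ = 0 →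
      ∃ z : C₂, u (L g₀ g₁) + Ldot g₀ g₁ = d₂ z) := by
  have h2 : ∀ z : C₂, z + z = 0 := by
    intro z
    rw [← two_smul (ZMod 2) z, show (2 : ZMod 2) = 0 by decide, zero_smul]
  have h2' : ∀ z : C₂, (2 : ℤ) • z = 0 := fun z => by rw [two_zsmul]; exact h2 z
  have main : ∀ (g₀ : C₀ × C₀) (g₁ : C₁ × C₁),
      d₂ (Lplus g₀ g₁) + Lplus (D₀ g₀) g₁ + Lplus g₀ (D₁ g₁) =
        u (L g₀ g₁) + Ldot g₀ g₁ := by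
    rintro ⟨x₀, y₀⟩ ⟨x₁, y₁⟩
    have hB := hBplus x₀ x₁
    have hA1 := hAplus x₀ y₁
    have hA2 := hAplus y₀ x₁
    have eB : d₂ (Bplus x₀ x₁) =
        Aplus (v₀ x₀) x₁ + Aplus x₀ (v₁ x₁) + u (B x₀ x₁) + Bdot x₀ x₁
          - Bplus (d₀ x₀) x₁ - Bplus x₀ (d₁ x₁) := by
      rw [← hB]; abel
    have eA1 : d₂ (Aplus x₀ y₁) =
        u (A x₀ y₁) + Adot x₀ y₁ - Aplus (d₀ x₀) y₁ - Aplus x₀ (d₁ y₁) := by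
      rw [← hA1]; abel
    have eA2 : d₂ (Aplus y₀ x₁) =
        u (A y₀ x₁) + Adot y₀ x₁ - Aplus (d₀ y₀) x₁ - Aplus y₀ (d₁ x₁) := by
      rw [← hA2]; abel
    simp only [hLplus, hL, hLdot, hD₀, hD₁, map_add, LinearMap.add_apply]
    rw [eB, eA1, eA2]
    rw [← sub_eq_zero]
    abel_nf
    simp [h2', h2]
  refine ⟨main, ?_⟩
  intro g₀ g₁ h0 h1
  refine ⟨Lplus g₀ g₁, ?_⟩
  have := main g₀ g₁
  rw [h0, h1] at this
  have hz1 : Lplus 0 g₁ = 0 := by simp [hLplus]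
  have hz2 : Lplus g₀ 0 = 0 := by simp [hLplus]
  rw [hz1, hz2] at this
  simpa using this.symm
end

section
/- Let C₀, C₁, C₂ be vector spaces over the field 𝔽₂ with two elements, with linear endomorphisms d₀, d₁, d₂ respectively; let v₀ : C₀ → C₀, v₁ : C₁ → C₁ and u : C₂ → C₂ be linear maps; let A, B, Ȧ, Ḃ, A⁺, B⁺ : C₀ × C₁ → C₂ be 𝔽₂-bilinear maps; let δ₂ : C₂ → 𝔽₂, δ₀ : C₀ → 𝔽₂, δ₁ : C₁ → 𝔽₂ be linear maps and Ȧᶿ, Ḃᶿ : C₀ × C₁ → 𝔽₂ be 𝔽₂-bilinear maps. Assume for all x ∈ C₀, y ∈ C₁: (1) d₂(A⁺(x,y)) + A⁺(d₀x,y) + A⁺(x,d₁y) = u(A(x,y)) + Ȧ(x,y); (2) d₂(B⁺(x,y)) + B⁺(d₀x,y) + B⁺(x,d₁y) = A⁺(v₀x,y) + A⁺(x,v₁y) + u(B(x,y)) + Ḃ(x,y); (3) δ₂ ∘ d₂ = 0; (4) δ₂(Ȧ(x,y)) = Ȧᶿ(d₀x, y) + Ȧᶿ(x, d₁y); (5)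 δ₂(Ḃ(x,y)) + Ḃᶿ(d₀x, y) + Ḃᶿ(x, d₁y) = Ȧᶿ(v₀x, y) + Ȧᶿ(x, v₁y) + δ₀(x)·δ₁(y). Define 𝓛((x₀,y₀),(x₁,y₁)) := B(x₀,x₁) + A(x₀,y₁) + A(y₀,x₁). Then for all g₀ = (x₀,y₀) ∈ C₀ × C₀ and g₁ = (x₁,y₁) ∈ C₁ × C₁ satisfying d₀x₀ = 0, v₀x₀ + d₀y₀ = 0, d₁x₁ = 0, v₁x₁ + d₁y₁ = 0, one has δ₂(u(𝓛(g₀,g₁))) = δ₀(x₀)·δ₁(x₁). -/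
/-- Proposition 8.9(ii) (algebraic content): on mapping-cone cocycles,
`δ₂(u(𝓛(g₀,g₁))) = δ₀(x₀)·δ₁(x₁)`. -/
theorem delta_u_pairing
    (C₀ C₁ C₂ : Type*)
    [AddCommGroup C₀] [Module (ZMod 2) C₀]
    [AddCommGroup C₁] [Module (ZMod 2) C₁]
    [AddCommGroup C₂] [Module (ZMod 2) C₂]
    (d₀ : C₀ →ₗ[ZMod 2] C₀) (d₁ : C₁ →ₗ[ZMod 2] C₁) (d₂ : C₂ →ₗ[ZMod 2] C₂)
    (v₀ : C₀ →ₗ[ZMod 2] C₀) (v₁ : C₁ →ₗ[ZMod 2] C₁) (u : C₂ →ₗ[ZMod 2] C₂)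
    (A B Adot Bdot Aplus Bplus : C₀ →ₗ[ZMod 2] C₁ →ₗ[ZMod 2] C₂)
    (δ₂ : C₂ →ₗ[ZMod 2] (ZMod 2))
    (δ₀ : C₀ →ₗ[ZMod 2] (ZMod 2)) (δ₁ : C₁ →ₗ[ZMod 2] (ZMod 2))
    (Adotθ Bdotθ : C₀ →ₗ[ZMod 2] C₁ →ₗ[ZMod 2] (ZMod 2))
    (h1 : ∀ (x : C₀) (y : C₁),
      d₂ (Aplus x y) + Aplus (d₀ x) y + Aplus x (d₁ y) = u (A x y) + Adot x y)
    (h2 : ∀ (x : C₀) (y : C₁),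
      d₂ (Bplus x y) + Bplus (d₀ x) y + Bplus x (d₁ y) =
        Aplus (v₀ x) y + Aplus x (v₁ y) + u (B x y) + Bdot x y)
    (h3 : δ₂ ∘ₗ d₂ = 0)
    (h4 : ∀ (x : C₀) (y : C₁), δ₂ (Adot x y) = Adotθ (d₀ x) y + Adotθ x (d₁ y))
    (h5 : ∀ (x : C₀) (y : C₁),
      δ₂ (Bdot x y) + Bdotθ (d₀ x) y + Bdotθ x (d₁ y) =
        Adotθ (v₀ x) y + Adotθ x (v₁ y) + δ₀ x * δ₁ y)
    (L : C₀ × C₀ → C₁ × C₁ → C₂)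
    (hL : ∀ (g₀ : C₀ × C₀) (g₁ : C₁ × C₁),
      L g₀ g₁ = B g₀.1 g₁.1 + A g₀.1 g₁.2 + A g₀.2 g₁.1) :
    ∀ (x₀ y₀ : C₀) (x₁ y₁ : C₁),
      d₀ x₀ = 0 → v₀ x₀ + d₀ y₀ = 0 → d₁ x₁ = 0 → v₁ x₁ + d₁ y₁ = 0 →
      δ₂ (u (L (x₀, y₀) (x₁, y₁))) = δ₀ x₀ * δ₁ x₁ := by
  intro x₀ y₀ x₁ y₁ hx₀ hy₀ hx₁ hy₁
  have neg0 : ∀ a : C₀, -a = a := fun a => by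
    rw [← neg_one_smul (ZMod 2) a, show (-1 : ZMod 2) = 1 from rfl, one_smul]
  have neg1 : ∀ a : C₁, -a = a := fun a => by
    rw [← neg_one_smul (ZMod 2) a, show (-1 : ZMod 2) = 1 from rfl, one_smul]
  have hd₀y₀ : d₀ y₀ = v₀ x₀ := by
    have h := neg_eq_of_add_eq_zero_right hy₀
    rw [neg0] at h; exact h.symm
  have hd₁y₁ : d₁ y₁ = v₁ x₁ := by
    have h := neg_eq_of_add_eq_zero_right hy₁
    rw [neg1] at h; exact h.symm
  have h3' : ∀ z : C₂, δ₂ (d₂ z) = 0 := fun z => congrFun (congrArg DFunLike.coe h3) z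
  have E1 := congrArg δ₂ (h1 x₀ y₁)
  have E2 := congrArg δ₂ (h1 y₀ x₁)
  have E3 := congrArg δ₂ (h2 x₀ x₁)
  have E4 := h4 x₀ y₁
  have E5 := h4 y₀ x₁
  have E6 := h5 x₀ x₁
  rw [hL]
  simp only [hx₀, hx₁, hd₀y₀, hd₁y₁, map_add, h3', LinearMap.map_zero,
    LinearMap.zero_apply, zero_add, add_zero] at E1 E2 E3 E4 E5 E6 ⊢
  have h2z : (2 : ZMod 2) = 0 := rfl
  linear_combination E1 + E2 + E3 + E4 + E5 + E6 +
    (δ₂ (u (B x₀ x₁)) + δ₂ (u (A x₀ y₁)) + δ₂ (u (A y₀ x₁)) +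
      Adotθ x₀ (v₁ x₁) + Adotθ (v₀ x₀) x₁) * h2z
end
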